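/- Let $\mu$ be a Borel probability measure on $\mathbb{T}^n \times \mathbb{R}^n$ with $\int L\,d\mu = 0$ and $\int(v\cdot D\varphi - a\Delta\varphi)\,d\mu = 0$ for all $\varphi \in C^2(\mathbb{T}^n)$. Let $u \in C(\mathbb{T}^n)$ and suppose for each $\eta > 0$ there exist $\psi^\eta \in C^2(\mathbb{T}^n)$ and continuous $S^\eta$ with $\|S^\eta\|_\infty \le C$ uniformly, $S^\eta \to 0$ pointwise as $\eta\to 0$, such that $\varepsilon u(x) + H(x, D\psi^\eta(x)) - a(x)\Delta\psi^\eta(x) \le S^\eta(x)$ on $\mathbb{T}^n$. Then $\int_{\mathbb{T}^n\times\mathbb{R}^n} u(x)\,d\mu(x,v) \le 0$. -/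

import Mathlib

open MeasureTheory Filter

noncomputable section

def ZnPeriodic {n : ℕ} {α : Type*} (f : EuclideanSpace ℝ (Fin n) → α) : Prop :=
  ∀ (x : EuclideanSpace ℝ (Fin n)) (k : Fin n → ℤ),
    f (x + (WithLp.equiv 2 (Fin n → ℝ)).symm fun i => (k i : ℝ)) = f x

def lap {n : ℕ} (f : EuclideanSpace ℝ (Fin n) → ℝ)
    (x : EuclideanSpace ℝ (Fin n)) : ℝ :=
  ∑ i : Fin n, fderiv ℝ (fun y => fderiv ℝ f y (EuclideanSpace.single i 1)) x
    (EuclideanSpace.single i 1)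

/-- A probability measure on `𝕋ⁿ × ℝⁿ` is holonomic if
`∫ (v·Dφ − aΔφ) dμ = 0` for all `φ ∈ C²(𝕋ⁿ)`. -/
def Holonomic {n : ℕ} (a : EuclideanSpace ℝ (Fin n) → ℝ)
    (μ : Measure (EuclideanSpace ℝ (Fin n) × EuclideanSpace ℝ (Fin n))) : Prop :=
  ∀ φ : EuclideanSpace ℝ (Fin n) → ℝ, ContDiff ℝ 2 φ → ZnPeriodic φ →
    ∫ q, ((inner ℝ q.2 (gradient φ q.1) : ℝ) - a q.1 * lap φ q.1) ∂μ = 0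

/-!
Fenchel's inequality `p·v − H(x,p) ≤ L(x,v)` at `p = Dψ^η(x)` turns the subsolution inequality
into `εu ≤ S^η + L − (v·Dψ^η − aΔψ^η)` on `𝕋ⁿ × ℝⁿ`. Integrated against `μ`, the last term
vanishes by holonomy and `L` by zero action, so `ε ∫ u dμ ≤ ∫ S^η dμ`, and the right side tends
to `0` by dominated convergence. Periodicity and continuity make every function of `x` bounded,
which is what all the integrability needs.
-/

namespace ZnPeriodic

variable {n : ℕ}

lemma comp {α β : Type*} {f : EuclideanSpace ℝ (Fin n) → α} (hf : ZnPeriodic f) (g : α → β) :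
    ZnPeriodic (g ∘ f) :=
  fun x k => congrArg g (hf x k)

lemma mul {M : Type*} [Mul M] {f g : EuclideanSpace ℝ (Fin n) → M} (hf : ZnPeriodic f)
    (hg : ZnPeriodic g) : ZnPeriodic (fun x => f x * g x) :=
  fun x k => congrArg₂ (· * ·) (hf x k) (hg x k)

lemma exists_norm_le {F : Type*} [SeminormedAddCommGroup F] {f : EuclideanSpace ℝ (Fin n) → F}
    (hf : ZnPeriodic f) (hc : Continuous f) : ∃ M, ∀ x, ‖f x‖ ≤ M := by
  let e := (EuclideanSpace.equiv (Fin n) ℝ).symm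
  have hcube : IsCompact (e '' Set.univ.pi fun _ => Set.Icc (0 : ℝ) 1) :=
    (isCompact_univ_pi fun _ => isCompact_Icc).image e.continuous
  obtain ⟨M, hM⟩ := hcube.exists_bound_of_continuousOn hc.continuousOn
  refine ⟨M, fun x => ?_⟩
  -- every point is an integer translate of a point of the unit cube
  rw [← hf x fun i => -⌊x i⌋]
  refine hM _ ⟨fun i => Int.fract (x i),
    fun i _ => ⟨Int.fract_nonneg _, (Int.fract_lt_one _).le⟩, ?_⟩
  ext i
  simp [e, Int.fract, sub_eq_add_neg]

lemma fderiv {F : Type*} [NormedAddCommGroup F] [NormedSpace ℝ F]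
    {f : EuclideanSpace ℝ (Fin n) → F} (hf : ZnPeriodic f) : ZnPeriodic (_root_.fderiv ℝ f) :=
  fun x k => by rw [← fderiv_comp_add_right, funext fun y => hf y k]

lemma gradient {f : EuclideanSpace ℝ (Fin n) → ℝ} (hf : ZnPeriodic f) :
    ZnPeriodic (_root_.gradient f) :=
  hf.fderiv.comp (InnerProductSpace.toDual ℝ _).symm

lemma lap {f : EuclideanSpace ℝ (Fin n) → ℝ} (hf : ZnPeriodic f) : ZnPeriodic (_root_.lap f) :=
  fun x k => Finset.sum_congr rfl fun i _ =>
    congrArg (· (EuclideanSpace.single i 1))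
      ((hf.fderiv.comp (· (EuclideanSpace.single i 1))).fderiv x k)

end ZnPeriodic

lemma ContDiff.continuous_gradient {F : Type*} [NormedAddCommGroup F] [InnerProductSpace ℝ F]
    [CompleteSpace F] {f : F → ℝ} (hf : ContDiff ℝ 1 f) : Continuous (gradient f) :=
  (InnerProductSpace.toDual ℝ F).symm.continuous.comp (hf.continuous_fderiv one_ne_zero)

lemma ContDiff.continuous_lap {n : ℕ} {f : EuclideanSpace ℝ (Fin n) → ℝ} (hf : ContDiff ℝ 2 f) :
    Continuous (lap f) :=
  have hpartial : ∀ v, ContDiff ℝ 1 fun y => fderiv ℝ f y v := fun _ =>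
    (hf.fderiv_right (m := 1) le_rfl).clm_apply contDiff_const
  continuous_finsetSum _ fun _ _ =>
    ((hpartial _).continuous_fderiv one_ne_zero).clm_apply continuous_const

section Integrability

variable {n : ℕ}

lemma ZnPeriodic.integrable_comp_fst {W : Type*} [MeasurableSpace W]
    {μ : Measure (EuclideanSpace ℝ (Fin n) × W)} [IsFiniteMeasure μ]
    {f : EuclideanSpace ℝ (Fin n) → ℝ} (hf : ZnPeriodic f) (hc : Continuous f) :
    Integrable (fun q => f q.1) μ :=
  let ⟨M, hM⟩ := hf.exists_norm_le hc
  .of_bound (hc.measurable.comp measurable_fst).aestronglyMeasurable M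
    (ae_of_all _ fun q => hM q.1)

lemma ZnPeriodic.integrable_inner_snd
    {μ : Measure (EuclideanSpace ℝ (Fin n) × EuclideanSpace ℝ (Fin n))}
    (hμv : Integrable (fun q => ‖q.2‖) μ) {g : EuclideanSpace ℝ (Fin n) → EuclideanSpace ℝ (Fin n)}
    (hg : ZnPeriodic g) (hc : Continuous g) :
    Integrable (fun q => (inner ℝ q.2 (g q.1) : ℝ)) μ := by
  obtain ⟨M, hM⟩ := hg.exists_norm_le hc
  refine (hμv.mul_const M).mono'
    (continuous_snd.inner (hc.comp continuous_fst)).aestronglyMeasurable (ae_of_all _ fun q => ?_)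
  exact (norm_inner_le_norm _ _).trans (mul_le_mul_of_nonneg_left (hM q.1) (norm_nonneg _))

lemma integrable_holonomy_integrand {a : EuclideanSpace ℝ (Fin n) → ℝ} (ha : Continuous a)
    (haper : ZnPeriodic a) {μ : Measure (EuclideanSpace ℝ (Fin n) × EuclideanSpace ℝ (Fin n))}
    [IsFiniteMeasure μ] (hμv : Integrable (fun q => ‖q.2‖) μ) {φ : EuclideanSpace ℝ (Fin n) → ℝ}
    (hφ : ContDiff ℝ 2 φ) (hφper : ZnPeriodic φ) :
    Integrable (fun q => (inner ℝ q.2 (gradient φ q.1) : ℝ) - a q.1 * lap φ q.1) μ :=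
  (hφper.gradient.integrable_inner_snd hμv (hφ.of_le one_le_two).continuous_gradient).sub
    ((haper.mul hφper.lap).integrable_comp_fst (ha.mul hφ.continuous_lap))

end Integrability

theorem Holonomic.integral_le_of_subsolution {n : ℕ}
    {H L : EuclideanSpace ℝ (Fin n) → EuclideanSpace ℝ (Fin n) → ℝ}
    (hfenchel : ∀ x p v, (inner ℝ p v : ℝ) - H x p ≤ L x v)
    {a : EuclideanSpace ℝ (Fin n) → ℝ} (ha : Continuous a) (haper : ZnPeriodic a)
    {μ : Measure (EuclideanSpace ℝ (Fin n) × EuclideanSpace ℝ (Fin n))} [IsFiniteMeasure μ]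
    (hμhol : Holonomic a μ) (hμv : Integrable (fun q => ‖q.2‖) μ)
    (hμL : Integrable (fun q => L q.1 q.2) μ) (hμL0 : ∫ q, L q.1 q.2 ∂μ = 0)
    {w s ψ : EuclideanSpace ℝ (Fin n) → ℝ} (hw : Integrable (fun q => w q.1) μ)
    (hs : Integrable (fun q => s q.1) μ) (hψ : ContDiff ℝ 2 ψ) (hψper : ZnPeriodic ψ)
    (hsub : ∀ x, w x + H x (gradient ψ x) - a x * lap ψ x ≤ s x) :
    ∫ q, w q.1 ∂μ ≤ ∫ q, s q.1 ∂μ := by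
  have hhol := integrable_holonomy_integrand ha haper hμv hψ hψper
  have hsL : Integrable (fun q => s q.1 + L q.1 q.2) μ := hs.add hμL
  have hpointwise : ∀ q : EuclideanSpace ℝ (Fin n) × EuclideanSpace ℝ (Fin n),
      w q.1 ≤ s q.1 + L q.1 q.2 -
        ((inner ℝ q.2 (gradient ψ q.1) : ℝ) - a q.1 * lap ψ q.1) := fun q => by
    have := hfenchel q.1 (gradient ψ q.1) q.2
    rw [real_inner_comm] at this
    linarith [hsub q.1]
  calc ∫ q, w q.1 ∂μ
      ≤ ∫ q, s q.1 + L q.1 q.2 -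
          ((inner ℝ q.2 (gradient ψ q.1) : ℝ) - a q.1 * lap ψ q.1) ∂μ :=
        integral_mono hw (hsL.sub hhol) hpointwise
    _ = ∫ q, s q.1 ∂μ := by
        rw [integral_sub hsL hhol, integral_add hs hμL, hμL0, hμhol ψ hψ hψper]
        simp

theorem discounted_integral_nonpos_general {n : ℕ}
    (H L : EuclideanSpace ℝ (Fin n) → EuclideanSpace ℝ (Fin n) → ℝ)
    (a : EuclideanSpace ℝ (Fin n) → ℝ)
    (ha : ContDiff ℝ 2 a) (haper : ZnPeriodic a)
    (hleg : ∀ x v, IsLUB {r : ℝ | ∃ p, r = inner ℝ p v - H x p} (L x v))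
    (μ : Measure (EuclideanSpace ℝ (Fin n) × EuclideanSpace ℝ (Fin n)))
    (hμ : IsProbabilityMeasure μ)
    (hμv : Integrable (fun q => ‖q.2‖) μ)
    (hμhol : Holonomic a μ)
    (hμL : Integrable (fun q => L q.1 q.2) μ)
    (hμL0 : ∫ q, L q.1 q.2 ∂μ = 0)
    (u : EuclideanSpace ℝ (Fin n) → ℝ) (hu : Continuous u) (huper : ZnPeriodic u)
    (ε : ℝ) (hε : 0 < ε)
    (Ψ S : ℝ → EuclideanSpace ℝ (Fin n) → ℝ) (C : ℝ)
    (hΨ : ∀ η : ℝ, 0 < η → ContDiff ℝ 2 (Ψ η) ∧ ZnPeriodic (Ψ η))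
    (hS : ∀ η : ℝ, 0 < η → Continuous (S η) ∧ ZnPeriodic (S η) ∧ ∀ x, |S η x| ≤ C)
    (hS0 : ∀ x, Tendsto (fun η => S η x) (nhdsWithin 0 (Set.Ioi 0)) (nhds 0))
    (hsub : ∀ η : ℝ, 0 < η → ∀ x,
      ε * u x + H x (gradient (Ψ η) x) - a x * lap (Ψ η) x ≤ S η x) :
    ∫ q, u q.1 ∂μ ≤ 0 := by
  have hfenchel : ∀ x p v, (inner ℝ p v : ℝ) - H x p ≤ L x v :=
    fun x p v => (hleg x v).1 ⟨p, rfl⟩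
  have hbound : ∀ η > 0, ε * ∫ q, u q.1 ∂μ ≤ ∫ q, S η q.1 ∂μ := fun η hη => by
    rw [← integral_const_mul]
    exact hμhol.integral_le_of_subsolution hfenchel ha.continuous haper hμv hμL hμL0
      ((huper.integrable_comp_fst hu).const_mul ε)
      ((hS η hη).2.1.integrable_comp_fst (hS η hη).1) (hΨ η hη).1 (hΨ η hη).2 (hsub η hη)
  have hlim : Tendsto (fun η => ∫ q, S η q.1 ∂μ) (nhdsWithin 0 (Set.Ioi 0)) (nhds 0) := by
    simpa using tendsto_integral_filter_of_dominated_convergence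
      (l := nhdsWithin (0 : ℝ) (Set.Ioi 0)) (μ := μ) (F := fun η q => S η q.1)
      (f := fun _ => 0) (fun _ => C)
      (eventually_mem_nhdsWithin.mono fun η hη =>
        ((hS η hη).1.measurable.comp measurable_fst).aestronglyMeasurable)
      (eventually_mem_nhdsWithin.mono fun η hη => ae_of_all _ fun q => (hS η hη).2.2 q.1)
      (integrable_const C) (ae_of_all _ fun q => hS0 q.1)
  have hεI : ε * ∫ q, u q.1 ∂μ ≤ 0 :=
    ge_of_tendsto hlim (eventually_mem_nhdsWithin.mono hbound)
  exact nonpos_of_mul_nonpos_right hεI hε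

/-- Proposition 2.5: if `μ` has zero action and is holonomic,
`u ∈ C(𝕋ⁿ)`, `ε > 0`, and for each `η > 0` there are `ψ^η ∈ C²` and errors
`S^η` (uniformly bounded, → 0 pointwise) with
`εu + H(x,Dψ^η) − aΔψ^η ≤ S^η`, then `∫ u dμ ≤ 0`. -/
theorem discounted_integral_nonpos {n : ℕ}
    (H L : EuclideanSpace ℝ (Fin n) → EuclideanSpace ℝ (Fin n) → ℝ)
    (a : EuclideanSpace ℝ (Fin n) → ℝ)
    (ha : ContDiff ℝ 2 a) (haper : ZnPeriodic a) (hapos : ∀ x, 0 ≤ a x)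
    (hconv : ∀ x, ConvexOn ℝ Set.univ (H x))
    (hleg : ∀ x v, IsLUB {r : ℝ | ∃ p, r = inner ℝ p v - H x p} (L x v))
    (μ : Measure (EuclideanSpace ℝ (Fin n) × EuclideanSpace ℝ (Fin n)))
    (hμ : IsProbabilityMeasure μ)
    (hμv : Integrable (fun q => ‖q.2‖) μ)
    (hμhol : Holonomic a μ)
    (hμL : Integrable (fun q => L q.1 q.2) μ)
    (hμL0 : ∫ q, L q.1 q.2 ∂μ = 0)
    (u : EuclideanSpace ℝ (Fin n) → ℝ) (hu : Continuous u) (huper : ZnPeriodic u)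
    (ε : ℝ) (hε : 0 < ε)
    (Ψ S : ℝ → EuclideanSpace ℝ (Fin n) → ℝ) (C : ℝ)
    (hΨ : ∀ η : ℝ, 0 < η → ContDiff ℝ 2 (Ψ η) ∧ ZnPeriodic (Ψ η))
    (hS : ∀ η : ℝ, 0 < η → Continuous (S η) ∧ ZnPeriodic (S η) ∧ ∀ x, |S η x| ≤ C)
    (hS0 : ∀ x, Tendsto (fun η => S η x) (nhdsWithin 0 (Set.Ioi 0)) (nhds 0))
    (hsub : ∀ η : ℝ, 0 < η → ∀ x,
      ε * u x + H x (gradient (Ψ η) x) - a x * lap (Ψ η) x ≤ S η x) :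
    ∫ q, u q.1 ∂μ ≤ 0 :=
  discounted_integral_nonpos_general H L a ha haper hleg μ hμ hμv hμhol hμL hμL0 u hu huper ε hε Ψ S
    C hΨ hS hS0 hsub

end
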